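/- Fix real numbers R, ε > 0. For each integer N ≥ 1, let M_N be the largest cardinality of a subset of the closed Euclidean ball of radius R centered at the origin in ℝᴺ whose distinct points are at pairwise Euclidean distance at least 2ε. Then liminf_{N→∞} (log₂ M_N)/N ≥ log₂(R/ε) − 1 and limsup_{N→∞} (log₂ M_N)/N ≤ log₂(1 + R/(√2·ε)). -/

import Mathlib

open Metric Filter

/-- `M_N`: the maximal cardinality of a subset of the closed ball of radius `R` in `ℝᴺ`
whose distinct points are at pairwise Euclidean distance at least `2ε`, so that `log₂ M_N`
is the Kolmogorov `2ε`-capacity of the ball. -/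
noncomputable def maxSep (R ε : ℝ) (N : ℕ) : ℕ :=
  sSup {M : ℕ | ∃ a : Fin M → EuclideanSpace ℝ (Fin N), Function.Injective a ∧
    (∀ i, a i ∈ closedBall (0 : EuclideanSpace ℝ (Fin N)) R) ∧
    ∀ i j, i ≠ j → 2 * ε ≤ dist (a i) (a j)}

/-!
A maximal `2ε`-separated subset of the ball `B_R ⊆ ℝᴺ` is a `2ε`-net, so comparing volumes
gives `R^N ≤ M_N (2ε)^N`, i.e. the lower bound. For the upper bound, put a ball of radius `√2 ε`
around each point of a `2ε`-separated set. The vectors from any `x` to the centres of the balls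
containing `x` have length at most `√2 ε` and pairwise distances at least `2ε`, hence pairwise
nonpositive inner products; there are at most `2N` such nonzero vectors in `ℝᴺ`, so these balls
overlap at most `2N + 1` times inside the ball of radius `R + √2 ε`. Thus
`M_N (√2 ε)^N ≤ (2N + 1)(R + √2 ε)^N`, and `log₂(2N + 1) / N → 0`.
-/

open MeasureTheory Module Finset Topology
open scoped RealInnerProductSpace

section InnerNonpos

variable {E : Type*} [NormedAddCommGroup E] [InnerProductSpace ℝ E]

lemma starProjection_orthogonal_span_singleton_apply (v x : E) :
    (ℝ ∙ v)ᗮ.starProjection x = x - (⟪v, x⟫ / ‖v‖ ^ 2) • v := by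
  rw [Submodule.starProjection_orthogonal_val, Submodule.starProjection_singleton]
  rfl

lemma inner_starProjection_orthogonal_span_singleton (v x y : E) :
    ⟪(ℝ ∙ v)ᗮ.starProjection x, (ℝ ∙ v)ᗮ.starProjection y⟫ =
      ⟪x, y⟫ - ⟪v, x⟫ * ⟪v, y⟫ / ‖v‖ ^ 2 := by
  simp only [starProjection_orthogonal_span_singleton_apply, inner_sub_left, inner_sub_right,
    real_inner_smul_left, real_inner_smul_right, real_inner_self_eq_norm_sq, real_inner_comm x v]
  rcases eq_or_ne v 0 with rfl | hv
  · simp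
  have hv' : ‖v‖ ≠ 0 := norm_ne_zero_iff.mpr hv
  field_simp
  ring

lemma inner_starProjection_orthogonal_span_singleton_le {v x y : E} (hx : ⟪v, x⟫ ≤ 0)
    (hy : ⟪v, y⟫ ≤ 0) :
    ⟪(ℝ ∙ v)ᗮ.starProjection x, (ℝ ∙ v)ᗮ.starProjection y⟫ ≤ ⟪x, y⟫ := by
  rw [inner_starProjection_orthogonal_span_singleton, sub_le_self_iff]
  exact div_nonneg (mul_nonneg_of_nonpos_of_nonpos hx hy) (sq_nonneg _)

lemma starProjection_orthogonal_span_singleton_mem_inf {V : Submodule ℝ E} {v x : E}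
    (hv : v ∈ V) (hx : x ∈ V) : (ℝ ∙ v)ᗮ.starProjection x ∈ (ℝ ∙ v)ᗮ ⊓ V := by
  refine ⟨Submodule.starProjection_apply_mem _ x, ?_⟩
  rw [starProjection_orthogonal_span_singleton_apply]
  exact V.sub_mem hx (V.smul_mem _ hv)

lemma finrank_orthogonal_span_singleton_inf_add_one [FiniteDimensional ℝ E] {V : Submodule ℝ E}
    {v : E} (hv : v ∈ V) (hv0 : v ≠ 0) :
    finrank ℝ ((ℝ ∙ v)ᗮ ⊓ V : Submodule ℝ E) + 1 = finrank ℝ V := by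
  have := Submodule.finrank_add_inf_finrank_orthogonal
    ((Submodule.span_singleton_le_iff_mem v V).mpr hv)
  rw [finrank_span_singleton hv0] at this
  omega

lemma injOn_starProjection_orthogonal_span_singleton {v : E} (hv : v ≠ 0) {t : Finset E}
    (ht0 : (0 : E) ∉ t) (ht : (t : Set E).Pairwise fun x y => ⟪x, y⟫ ≤ 0)
    (hvt : ∀ x ∈ t, ⟪v, x⟫ ≤ 0) :
    Set.InjOn (ℝ ∙ v)ᗮ.starProjection t := by
  intro x hx y hy hxy
  by_contra hne
  have hid := inner_starProjection_orthogonal_span_singleton v x y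
  rw [← hxy, real_inner_self_eq_norm_sq] at hid
  have hq : 0 ≤ ⟪v, x⟫ * ⟪v, y⟫ / ‖v‖ ^ 2 :=
    div_nonneg (mul_nonneg_of_nonpos_of_nonpos (hvt x hx) (hvt y hy)) (sq_nonneg _)
  have hxy' : ⟪x, y⟫ ≤ 0 := ht hx hy hne
  have hPx : (ℝ ∙ v)ᗮ.starProjection x = 0 := by
    rw [← norm_eq_zero]; nlinarith [norm_nonneg ((ℝ ∙ v)ᗮ.starProjection x)]
  have hprod : ⟪v, x⟫ * ⟪v, y⟫ = 0 := by
    have : ⟪v, x⟫ * ⟪v, y⟫ / ‖v‖ ^ 2 = 0 := by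
      nlinarith [sq_nonneg ‖(ℝ ∙ v)ᗮ.starProjection x‖]
    simpa [hv] using this
  have hPy : (ℝ ∙ v)ᗮ.starProjection y = 0 := hxy ▸ hPx
  rw [starProjection_orthogonal_span_singleton_apply] at hPx hPy
  rcases mul_eq_zero.mp hprod with h | h
  · obtain rfl : x = 0 := by simpa [h] using hPx
    exact ht0 hx
  · obtain rfl : y = 0 := by simpa [h] using hPy
    exact ht0 hy

lemma card_le_card_image_starProjection_erase_add_two [DecidableEq E] {v : E} {s : Finset E}
    (hv : v ∈ s) (hs0 : (0 : E) ∉ s) (hs : (s : Set E).Pairwise fun x y => ⟪x, y⟫ ≤ 0) :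
    #s ≤ #(((s.erase v).image (ℝ ∙ v)ᗮ.starProjection).erase 0) + 2 := by
  have hinj : #((s.erase v).image (ℝ ∙ v)ᗮ.starProjection) = #(s.erase v) :=
    card_image_of_injOn <| injOn_starProjection_orthogonal_span_singleton
      (ne_of_mem_of_not_mem hv hs0) (fun h => hs0 (mem_of_mem_erase h))
      (hs.mono (coe_subset.mpr (erase_subset v s)))
      fun x hx => hs hv (mem_of_mem_erase hx) (ne_of_mem_erase hx).symm
  have herase : #((s.erase v).image (ℝ ∙ v)ᗮ.starProjection) - 1 ≤
      #(((s.erase v).image (ℝ ∙ v)ᗮ.starProjection).erase 0) := pred_card_le_card_erase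
  have hs : #(s.erase v) + 1 = #s := card_erase_add_one hv
  omega

-- Induction on `dim V`: for `v ∈ s`, the projection of `s \ {v}` to `vᗮ ∩ V` is injective,
-- keeps the vectors pairwise obtuse and sends at most one of them to `0`.
lemma Submodule.card_le_two_mul_finrank_of_pairwise_inner_nonpos [FiniteDimensional ℝ E]
    (V : Submodule ℝ E) {s : Finset E} (hsV : ∀ x ∈ s, x ∈ V) (hs0 : (0 : E) ∉ s)
    (hs : (s : Set E).Pairwise fun x y => ⟪x, y⟫ ≤ 0) : #s ≤ 2 * finrank ℝ V := by
  classical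
  induction hn : finrank ℝ V generalizing V s with
  | zero =>
    obtain rfl := Submodule.finrank_eq_zero.mp hn
    obtain rfl : s = ∅ := eq_empty_of_forall_notMem fun x hx =>
      hs0 ((Submodule.mem_bot ℝ).mp (hsV x hx) ▸ hx)
    simp
  | succ n ih =>
    obtain rfl | ⟨v, hv⟩ := s.eq_empty_or_nonempty
    · simp
    have hW : finrank ℝ ((ℝ ∙ v)ᗮ ⊓ V : Submodule ℝ E) = n := by
      have := finrank_orthogonal_span_singleton_inf_add_one (hsV v hv)
        (ne_of_mem_of_not_mem hv hs0)
      omega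
    have hvs : ∀ x ∈ s.erase v, ⟪v, x⟫ ≤ 0 := fun x hx =>
      hs hv (mem_of_mem_erase hx) (ne_of_mem_erase hx).symm
    have hproj := ih ((ℝ ∙ v)ᗮ ⊓ V) (s := ((s.erase v).image (ℝ ∙ v)ᗮ.starProjection).erase 0)
      ?_ (notMem_erase 0 _) ?_ hW
    · have := card_le_card_image_starProjection_erase_add_two hv hs0 hs
      omega
    · intro x hx
      obtain ⟨y, hy, rfl⟩ := mem_image.mp (mem_of_mem_erase hx)
      exact starProjection_orthogonal_span_singleton_mem_inf (hsV v hv)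
        (hsV y (mem_of_mem_erase hy))
    · intro x hx y hy hxy
      obtain ⟨a, ha, rfl⟩ := mem_image.mp (mem_of_mem_erase hx)
      obtain ⟨b, hb, rfl⟩ := mem_image.mp (mem_of_mem_erase hy)
      have hab : ⟪a, b⟫ ≤ 0 :=
        hs (mem_of_mem_erase ha) (mem_of_mem_erase hb) (fun h => hxy (h ▸ rfl))
      exact (inner_starProjection_orthogonal_span_singleton_le (hvs a ha) (hvs b hb)).trans hab

lemma card_le_two_mul_finrank_of_pairwise_inner_nonpos [FiniteDimensional ℝ E] {s : Finset E}
    (hs0 : (0 : E) ∉ s) (hs : (s : Set E).Pairwise fun x y => ⟪x, y⟫ ≤ 0) :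
    #s ≤ 2 * finrank ℝ E :=
  finrank_top ℝ E ▸ (⊤ : Submodule ℝ E).card_le_two_mul_finrank_of_pairwise_inner_nonpos
    (fun _ _ => Submodule.mem_top) hs0 hs

lemma inner_nonpos_of_norm_le_of_two_mul_sq_le {u w : E} {r : ℝ} (hu : ‖u‖ ≤ r) (hw : ‖w‖ ≤ r)
    (huw : 2 * r ^ 2 ≤ ‖u - w‖ ^ 2) : ⟪u, w⟫ ≤ 0 := by
  rw [norm_sub_sq_real] at huw
  nlinarith [norm_nonneg u, norm_nonneg w]

end InnerNonpos

section Packing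

variable {E : Type*} [NormedAddCommGroup E] [InnerProductSpace ℝ E] [FiniteDimensional ℝ E]

lemma card_filter_dist_le_le_two_mul_finrank_add_one {s : Finset E} {ε : ℝ} (hε : 0 ≤ ε)
    (hs : (s : Set E).Pairwise fun x y => 2 * ε ≤ dist x y) (x : E) :
    #{a ∈ s | dist a x ≤ √2 * ε} ≤ 2 * finrank ℝ E + 1 := by
  classical
  set t := {a ∈ s | dist a x ≤ √2 * ε}
  have hcard : #(t.image (· - x)) = #t := card_image_of_injective _ (sub_left_injective)
  have hobtuse := card_le_two_mul_finrank_of_pairwise_inner_nonpos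
    (s := (t.image (· - x)).erase 0) (notMem_erase 0 _) ?_
  · have : #(t.image (· - x)) - 1 ≤ #((t.image (· - x)).erase 0) := pred_card_le_card_erase
    omega
  intro u hu w hw huw
  obtain ⟨a, ha, rfl⟩ := mem_image.mp (mem_of_mem_erase hu)
  obtain ⟨b, hb, rfl⟩ := mem_image.mp (mem_of_mem_erase hw)
  rw [mem_filter] at ha hb
  apply inner_nonpos_of_norm_le_of_two_mul_sq_le (r := √2 * ε)
  · rw [← dist_eq_norm]; exact ha.2
  · rw [← dist_eq_norm]; exact hb.2
  · have hab : 2 * ε ≤ ‖a - b‖ := by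
      rw [← dist_eq_norm]; exact hs ha.1 hb.1 (fun h => huw (h ▸ rfl))
    calc 2 * (√2 * ε) ^ 2 = (2 * ε) ^ 2 := by rw [mul_pow, Real.sq_sqrt zero_le_two]; ring
      _ ≤ ‖a - b‖ ^ 2 := by gcongr
      _ = ‖a - x - (b - x)‖ ^ 2 := by rw [sub_sub_sub_cancel_right]

end Packing

open Classical in
lemma MeasureTheory.sum_measure_le_mul_measure_of_card_le {α ι : Type*} [MeasurableSpace α]
    (μ : Measure α) (s : Finset ι) {A : ι → Set α} {S : Set α}
    (hA : ∀ i ∈ s, MeasurableSet (A i)) (hAS : ∀ i ∈ s, A i ⊆ S) {k : ℕ}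
    (hk : ∀ x, #{i ∈ s | x ∈ A i} ≤ k) :
    ∑ i ∈ s, μ (A i) ≤ k * μ S := by
  calc ∑ i ∈ s, μ (A i) = ∫⁻ x, ∑ i ∈ s, (A i).indicator 1 x ∂μ := by
        rw [lintegral_finsetSum _ fun i hi => measurable_one.indicator (hA i hi)]
        exact sum_congr rfl fun i hi => (lintegral_indicator_one (hA i hi)).symm
    _ ≤ ∫⁻ x, S.indicator (fun _ => (k : ENNReal)) x ∂μ := by
        refine lintegral_mono fun x => ?_
        by_cases hx : x ∈ S
        · rw [Set.indicator_of_mem hx]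
          simp only [Set.indicator_apply, Pi.one_apply, sum_boole]
          exact_mod_cast hk x
        · rw [Set.indicator_of_notMem hx, sum_eq_zero fun i hi =>
            Set.indicator_of_notMem (fun h => hx (hAS i hi h)) _]
    _ ≤ k * μ S := lintegral_indicator_const_le S _

section Volume

variable {E : Type*} [NormedAddCommGroup E] [InnerProductSpace ℝ E] [FiniteDimensional ℝ E]
  [MeasurableSpace E] [BorelSpace E]

lemma pow_finrank_le_card_mul_of_closedBall_subset {s : Finset E} {c : E} {R δ : ℝ}
    (hR : 0 ≤ R) (hδ : 0 ≤ δ) (hcov : closedBall c R ⊆ ⋃ a ∈ s, closedBall a δ) :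
    R ^ finrank ℝ E ≤ #s * δ ^ finrank ℝ E := by
  let μ : Measure E := Measure.addHaar
  have hunit : 0 < μ.real (ball 0 1) :=
    ENNReal.toReal_pos (measure_ball_pos μ 0 one_pos).ne' measure_ball_lt_top.ne
  refine le_of_mul_le_mul_right ?_ hunit
  calc R ^ finrank ℝ E * μ.real (ball 0 1) = μ.real (closedBall c R) :=
        (Measure.addHaar_real_closedBall μ c hR).symm
    _ ≤ μ.real (⋃ a ∈ s, closedBall a δ) :=
        measureReal_mono hcov (measure_biUnion_lt_top s.finite_toSet
          fun _ _ => measure_closedBall_lt_top).ne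
    _ ≤ ∑ a ∈ s, μ.real (closedBall a δ) := measureReal_biUnion_finset_le s _
    _ = #s * δ ^ finrank ℝ E * μ.real (ball 0 1) := by
        simp [Measure.addHaar_real_closedBall μ _ hδ, mul_assoc]

lemma card_mul_pow_finrank_le_of_pairwise_dist_le {s : Finset E} {c : E} {R ε : ℝ}
    (hR : 0 ≤ R) (hε : 0 ≤ ε) (hsR : ∀ a ∈ s, a ∈ closedBall c R)
    (hs : (s : Set E).Pairwise fun x y => 2 * ε ≤ dist x y) :
    #s * (√2 * ε) ^ finrank ℝ E ≤ (2 * finrank ℝ E + 1) * (R + √2 * ε) ^ finrank ℝ E := by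
  let μ : Measure E := Measure.addHaar
  have hunit : 0 < μ.real (ball 0 1) :=
    ENNReal.toReal_pos (measure_ball_pos μ 0 one_pos).ne' measure_ball_lt_top.ne
  have hr : 0 ≤ √2 * ε := by positivity
  have hvol : ∑ a ∈ s, μ (closedBall a (√2 * ε)) ≤
      (2 * finrank ℝ E + 1 : ℕ) * μ (closedBall c (R + √2 * ε)) := by
    refine sum_measure_le_mul_measure_of_card_le μ s (fun _ _ => measurableSet_closedBall)
      (fun a ha => closedBall_subset_closedBall' ?_) fun x => ?_
    · linarith [mem_closedBall.mp (hsR a ha)]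
    · simpa only [mem_closedBall, dist_comm x] using
        card_filter_dist_le_le_two_mul_finrank_add_one hε hs x
  refine le_of_mul_le_mul_right ?_ hunit
  calc #s * (√2 * ε) ^ finrank ℝ E * μ.real (ball 0 1)
      = (∑ a ∈ s, μ (closedBall a (√2 * ε))).toReal := by
        rw [ENNReal.toReal_sum fun _ _ => measure_closedBall_lt_top.ne]
        simp [← measureReal_def, Measure.addHaar_real_closedBall μ _ hr, mul_assoc]
    _ ≤ ((2 * finrank ℝ E + 1 : ℕ) * μ (closedBall c (R + √2 * ε))).toReal :=
        ENNReal.toReal_mono (ENNReal.mul_ne_top (ENNReal.natCast_ne_top _)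
          measure_closedBall_lt_top.ne) hvol
    _ = (2 * finrank ℝ E + 1) * (R + √2 * ε) ^ finrank ℝ E * μ.real (ball 0 1) := by
        rw [ENNReal.toReal_mul, ENNReal.toReal_natCast, ← measureReal_def,
          Measure.addHaar_real_closedBall μ _ (add_nonneg hR hr)]
        push_cast
        ring

end Volume

section MaxSep

variable {R ε : ℝ} {N : ℕ}

def sepCards (R ε : ℝ) (N : ℕ) : Set ℕ :=
  {M | ∃ s : Finset (EuclideanSpace ℝ (Fin N)), #s = M ∧ (∀ a ∈ s, a ∈ closedBall 0 R) ∧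
    (s : Set (EuclideanSpace ℝ (Fin N))).Pairwise fun x y => 2 * ε ≤ dist x y}

lemma maxSep_eq_sSup_sepCards : maxSep R ε N = sSup (sepCards R ε N) := by
  classical
  show sSup _ = sSup _
  congr 1
  ext M
  constructor
  · rintro ⟨a, ha, hR, hε⟩
    refine ⟨univ.map ⟨a, ha⟩, by simp, by simpa using hR, ?_⟩
    simp only [coe_map, coe_univ, Set.image_univ]
    rintro _ ⟨i, rfl⟩ _ ⟨j, rfl⟩ hij
    exact hε i j (fun h => hij (h ▸ rfl))
  · rintro ⟨s, rfl, hR, hε⟩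
    refine ⟨fun i => s.equivFin.symm i, Subtype.val_injective.comp s.equivFin.symm.injective,
      fun i => hR _ (s.equivFin.symm i).2, fun i j hij => hε (s.equivFin.symm i).2
        (s.equivFin.symm j).2 ?_⟩
    exact fun h => hij (s.equivFin.symm.injective (Subtype.val_injective h))

lemma bddAbove_sepCards (hR : 0 ≤ R) (hε : 0 < ε) : BddAbove (sepCards R ε N) := by
  refine ⟨⌊(2 * N + 1) * (R + √2 * ε) ^ N / (√2 * ε) ^ N⌋₊, ?_⟩
  rintro _ ⟨s, rfl, hsR, hs⟩
  apply Nat.le_floor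
  rw [le_div_iff₀ (by positivity)]
  simpa using card_mul_pow_finrank_le_of_pairwise_dist_le hR hε.le hsR hs

lemma exists_card_eq_maxSep (hR : 0 ≤ R) (hε : 0 < ε) :
    ∃ s : Finset (EuclideanSpace ℝ (Fin N)), #s = maxSep R ε N ∧
      (∀ a ∈ s, a ∈ closedBall 0 R) ∧
      (s : Set (EuclideanSpace ℝ (Fin N))).Pairwise fun x y => 2 * ε ≤ dist x y := by
  have hne : (sepCards R ε N).Nonempty := ⟨0, ∅, by simp⟩
  exact maxSep_eq_sSup_sepCards ▸ Nat.sSup_mem hne (bddAbove_sepCards hR hε)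

lemma card_le_maxSep (hR : 0 ≤ R) (hε : 0 < ε) {s : Finset (EuclideanSpace ℝ (Fin N))}
    (hsR : ∀ a ∈ s, a ∈ closedBall 0 R)
    (hs : (s : Set (EuclideanSpace ℝ (Fin N))).Pairwise fun x y => 2 * ε ≤ dist x y) :
    #s ≤ maxSep R ε N :=
  maxSep_eq_sSup_sepCards ▸ le_csSup (bddAbove_sepCards hR hε) ⟨s, rfl, hsR, hs⟩

lemma maxSep_mul_le (hR : 0 ≤ R) (hε : 0 < ε) :
    maxSep R ε N * (√2 * ε) ^ N ≤ (2 * N + 1) * (R + √2 * ε) ^ N := by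
  obtain ⟨s, hcard, hsR, hs⟩ := exists_card_eq_maxSep (N := N) hR hε
  simpa [hcard] using card_mul_pow_finrank_le_of_pairwise_dist_le hR hε.le hsR hs

lemma pow_le_maxSep_mul (hR : 0 ≤ R) (hε : 0 < ε) : R ^ N ≤ maxSep R ε N * (2 * ε) ^ N := by
  classical
  obtain ⟨s, hcard, hsR, hs⟩ := exists_card_eq_maxSep (N := N) hR hε
  have hcov : closedBall 0 R ⊆ ⋃ a ∈ s, closedBall a (2 * ε) := by
    intro x hx
    by_contra hx'
    simp only [Set.mem_iUnion, mem_closedBall, not_exists, not_le] at hx'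
    have hxs : x ∉ s := fun h => by linarith [hx' x h, dist_self x]
    have := card_le_maxSep hR hε (s := insert x s) ((forall_mem_insert _ _ _).mpr ⟨hx, hsR⟩) <| by
      rw [coe_insert, Set.pairwise_insert]
      exact ⟨hs, fun b hb _ => ⟨(hx' b hb).le, dist_comm x b ▸ (hx' b hb).le⟩⟩
    rw [card_insert_of_notMem hxs] at this
    omega
  simpa [hcard] using pow_finrank_le_card_mul_of_closedBall_subset hR (by positivity) hcov

end MaxSep

section Asymptotics

variable {R ε : ℝ} {N : ℕ}

lemma maxSep_pos (hR : 0 < R) (hε : 0 < ε) : 0 < maxSep R ε N := by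
  have := pow_le_maxSep_mul hR.le hε (N := N)
  by_contra! h
  simp only [Nat.le_zero.mp h, Nat.cast_zero, zero_mul] at this
  exact (pow_pos hR N).not_ge this

lemma logb_div_sub_one_le_logb_maxSep_div (hR : 0 < R) (hε : 0 < ε) (hN : 0 < N) :
    Real.logb 2 (R / ε) - 1 ≤ Real.logb 2 (maxSep R ε N) / N := by
  have hM : (R / (2 * ε)) ^ N ≤ maxSep R ε N := by
    rw [div_pow, div_le_iff₀ (by positivity)]
    exact pow_le_maxSep_mul hR.le hε
  have hlog := Real.logb_le_logb_of_le one_lt_two (by positivity) hM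
  rw [Real.logb_pow, mul_comm 2 ε, ← div_div, Real.logb_div (by positivity) two_ne_zero,
    Real.logb_self_eq_one one_lt_two] at hlog
  rw [le_div_iff₀ (by exact_mod_cast hN)]
  linarith

lemma logb_maxSep_div_le (hR : 0 < R) (hε : 0 < ε) (hN : 0 < N) :
    Real.logb 2 (maxSep R ε N) / N ≤
      Real.logb 2 (2 * N + 1) / N + Real.logb 2 (1 + R / (√2 * ε)) := by
  have hM : (maxSep R ε N : ℝ) ≤ (2 * N + 1) * (1 + R / (√2 * ε)) ^ N := by
    have h := maxSep_mul_le hR.le hε (N := N)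
    rw [one_add_div (by positivity : √2 * ε ≠ 0), div_pow, mul_div_assoc',
      le_div_iff₀ (by positivity)]
    rwa [add_comm (√2 * ε)]
  have hlog := Real.logb_le_logb_of_le one_lt_two (by exact_mod_cast maxSep_pos hR hε) hM
  rw [Real.logb_mul (by positivity) (by positivity), Real.logb_pow] at hlog
  rw [div_add' _ _ _ (by exact_mod_cast hN.ne')]
  gcongr
  linarith

lemma tendsto_logb_two_mul_add_one_div :
    Tendsto (fun N : ℕ => Real.logb 2 (2 * N + 1) / N) atTop (𝓝 0) := by
  -- `log x / ((x - 1) / 2)` at `x = 2N + 1`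
  have hlog : Tendsto (fun x : ℝ => Real.log x ^ 1 / (1 / 2 * x + -(1 / 2))) atTop (𝓝 0) :=
    Real.tendsto_pow_log_div_mul_add_atTop _ _ 1 (by norm_num)
  have hlin : Tendsto (fun N : ℕ => 2 * (N : ℝ) + 1) atTop atTop :=
    tendsto_atTop_add_const_right _ _ (tendsto_natCast_atTop_atTop.const_mul_atTop two_pos)
  have := (hlog.comp hlin).div_const (Real.log 2)
  rw [zero_div] at this
  refine this.congr fun N => ?_
  simp only [Function.comp, pow_one, Real.logb]
  ring_nf

end Asymptotics

/-- Euclidean-ball asymptotic form of Theorem 1: for `R, ε > 0`,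
`liminf (log₂ M_N)/N ≥ log₂(R/ε) − 1` and `limsup (log₂ M_N)/N ≤ log₂(1 + R/(√2·ε))`. -/
theorem two_eps_capacity_per_dof (R ε : ℝ) (hR : 0 < R) (hε : 0 < ε) :
    Real.logb 2 (R / ε) - 1 ≤
      atTop.liminf (fun N : ℕ => Real.logb 2 (maxSep R ε N) / (N : ℝ)) ∧
    atTop.limsup (fun N : ℕ => Real.logb 2 (maxSep R ε N) / (N : ℝ)) ≤
      Real.logb 2 (1 + R / (Real.sqrt 2 * ε)) := by
  have hlow : ∀ᶠ N : ℕ in atTop, Real.logb 2 (R / ε) - 1 ≤ Real.logb 2 (maxSep R ε N) / N :=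
    (eventually_gt_atTop 0).mono fun N hN => logb_div_sub_one_le_logb_maxSep_div hR hε hN
  have hup : ∀ᶠ N : ℕ in atTop, Real.logb 2 (maxSep R ε N) / N ≤
      Real.logb 2 (2 * N + 1) / N + Real.logb 2 (1 + R / (√2 * ε)) :=
    (eventually_gt_atTop 0).mono fun N hN => logb_maxSep_div_le hR hε hN
  have hlim := tendsto_logb_two_mul_add_one_div.add_const (Real.logb 2 (1 + R / (√2 * ε)))
  rw [zero_add] at hlim
  refine ⟨le_liminf_of_le (hlim.isBoundedUnder_le.mono_le hup).isCoboundedUnder_ge hlow, ?_⟩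
  exact (limsup_le_limsup hup (isCoboundedUnder_le_of_eventually_le atTop hlow)
    hlim.isBoundedUnder_le).trans_eq hlim.limsup_eq
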